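/- arXiv:1903.05265 — 8 statements merged into one kernel-verified Lean document; each statement's English description precedes it below -/
import Mathlib

section
/- Let F be a field and ω ∈ F an element of odd multiplicative order t. Consider the 3×t matrix M whose (r, c) entry is ω^(r·c) for r ∈ {0,1,2} and c ∈ {0,1,...,t−1}. Then every 2×2 submatrix of M (formed by choosing two distinct rows and two distinct columns) has nonzero determinant. -/
theorem stmt3 {F : Type*} [Field F] {ω : F} {t : ℕ} (ht : orderOf ω = t) (hodd : Odd t)
    (r₁ r₂ : Fin 3) (hr : r₁ < r₂) (c₁ c₂ : Fin t) (hc : c₁ < c₂) :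
    ω ^ ((r₁ : ℕ) * (c₁ : ℕ)) * ω ^ ((r₂ : ℕ) * (c₂ : ℕ)) -
      ω ^ ((r₁ : ℕ) * (c₂ : ℕ)) * ω ^ ((r₂ : ℕ) * (c₁ : ℕ)) ≠ 0 := by
  have htpos : 0 < t := Nat.pos_of_ne_zero (by rintro rfl; exact absurd hodd (by decide))
  have hω1 : ω ^ t = 1 := by rw [← ht]; exact pow_orderOf_eq_one ω
  have hω0 : ω ≠ 0 := by
    rintro rfl
    rw [zero_pow htpos.ne'] at hω1
    exact zero_ne_one hω1
  obtain ⟨e, he⟩ := Nat.exists_eq_add_of_lt (show (r₁:ℕ) < r₂ from hr)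
  obtain ⟨f, hf⟩ := Nat.exists_eq_add_of_lt (show (c₁:ℕ) < c₂ from hc)
  intro h
  have heq : ω ^ ((r₁ : ℕ) * (c₁ : ℕ)) * ω ^ ((r₂ : ℕ) * (c₂ : ℕ)) =
      ω ^ ((r₁ : ℕ) * (c₂ : ℕ)) * ω ^ ((r₂ : ℕ) * (c₁ : ℕ)) := by linear_combination h
  rw [← pow_add, ← pow_add, he, hf] at heq
  have hexp : (r₁:ℕ) * (c₁:ℕ) + ((r₁:ℕ) + e + 1) * ((c₁:ℕ) + f + 1) =
      ((r₁:ℕ) * ((c₁:ℕ) + f + 1) + ((r₁:ℕ) + e + 1) * (c₁:ℕ)) + (e + 1) * (f + 1) := by ring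
  rw [hexp, pow_add] at heq
  have h1 : ω ^ ((e + 1) * (f + 1)) = 1 := by
    have := mul_left_cancel₀ (pow_ne_zero _ hω0) (heq.trans (mul_one _).symm)
    exact this
  have hdvd : t ∣ (e + 1) * (f + 1) := ht ▸ orderOf_dvd_of_pow_eq_one h1
  have hflt : f + 1 < t := lt_of_le_of_lt (by omega) c₂.isLt
  have he2 : e + 1 ≤ 2 := by have := r₂.isLt; omega
  have he1 : e + 1 ∣ 2 := by
    have : e ≤ 1 := by omega
    interval_cases e <;> norm_num
  have hd2 : t ∣ 2 * (f + 1) := hdvd.trans (Nat.mul_dvd_mul_right he1 _)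
  have hdvdf : t ∣ f + 1 :=
    Nat.Coprime.dvd_of_dvd_mul_left (Odd.coprime_two_right hodd) hd2
  have := Nat.le_of_dvd (by omega) hdvdf
  omega
end

section
/- Let F be a field with a primitive n-th root of unity ω, let 1 ≤ r ≤ n, and let A be the r×n matrix with (a,c) entry ω^(a·c). Let v = (1,0,...,0)ᵀ and w = (0,...,0,1)ᵀ be r×1 columns, and let B = (v | w | A) be the r×(n+2) matrix. Then every r×r submatrix of B (formed by choosing r distinct columns of B) has nonzero determinant; hence B generates an MDS [n+2, r] code. -/
/-!
A vector `x` in the left kernel of the chosen columns is the coefficient vector of a polynomial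
`p` of degree `< r`. The column `v` says `p(0) = 0`, the column `w` says that the coefficient of
`X ^ (r - 1)` vanishes, and the Fourier column `k` says `p(ω ^ k) = 0`. The nodes `0` and `ω ^ k`
are pairwise distinct, so `p` has as many distinct roots as there are chosen columns other than
`w`; if `w` is chosen there are `r - 1` of them but then `deg p < r - 1`. Either way `p = 0`.
-/

open Polynomial Finset Matrix

namespace Polynomial

variable {R : Type*}

theorem coeff_ofFn [Semiring R] [DecidableEq R] {n : ℕ} (v : Fin n → R) (k : ℕ) :
    (ofFn n v).coeff k = ∑ i : Fin n, if (i : ℕ) = k then v i else 0 := by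
  simp [ofFn_eq_sum_monomial, coeff_monomial]

theorem eval_ofFn [CommSemiring R] [DecidableEq R] {n : ℕ} (v : Fin n → R) (t : R) :
    (ofFn n v).eval t = ∑ i : Fin n, v i * t ^ (i : ℕ) := by
  simp [ofFn_eq_sum_monomial, eval_finsetSum]

theorem eq_zero_of_degree_lt_card_of_eval_eq_zero' [CommRing R] [IsDomain R] (p : R[X])
    (s : Finset R) (heval : ∀ t ∈ s, p.eval t = 0) (hdeg : p.degree < #s) : p = 0 := by
  by_contra hp
  exact hp <| eq_zero_of_natDegree_lt_card_of_eval_eq_zero' p s heval <|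
    (natDegree_lt_iff_degree_lt hp).2 hdeg

theorem degree_lt_of_coeff_pred_eq_zero [Semiring R] {p : R[X]} {n : ℕ} (hp : p.degree < n)
    (hcoeff : p.coeff (n - 1) = 0) : p.degree < ↑(n - 1) := by
  rw [degree_lt_iff_coeff_zero] at hp ⊢
  intro m hm
  rcases hm.eq_or_lt with rfl | hlt
  · exact hcoeff
  · exact hp m (by omega)

end Polynomial

section

variable {F : Type*} [Field F] {n r : ℕ}

def extendedFourierMatrix (ω : F) (r n : ℕ) : Matrix (Fin r) (Fin 2 ⊕ Fin n) F :=
  Matrix.fromCols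
    (Matrix.of fun (a : Fin r) (j : Fin 2) =>
      if j = 0 then (if (a : ℕ) = 0 then (1 : F) else 0)
      else (if (a : ℕ) = r - 1 then 1 else 0))
    (Matrix.of fun (a : Fin r) (j : Fin n) => ω ^ ((a : ℕ) * (j : ℕ)))

/-- The columns `v` and `w` of `B` are indexed by `.inl 0` and `.inl 1`. Every column other than
`w` is the moment column `(t ^ a)ₐ` of the node `t` given here; for `v` this is `t = 0`, as
`0 ^ 0 = 1`. -/
def extendedFourierNode (ω : F) : Fin 2 ⊕ Fin n → F :=
  Sum.elim (fun _ => 0) (fun k => ω ^ (k : ℕ))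

theorem extendedFourierMatrix_apply_of_ne {ω : F} {s : Fin 2 ⊕ Fin n} (hs : s ≠ .inl 1)
    (a : Fin r) : extendedFourierMatrix ω r n a s = extendedFourierNode ω s ^ (a : ℕ) := by
  rcases s with i | k
  · obtain rfl : i = 0 := by
      have : i ≠ 1 := fun h => hs (h ▸ rfl)
      omega
    simp [extendedFourierMatrix, extendedFourierNode, zero_pow_eq]
  · simp [extendedFourierMatrix, extendedFourierNode, ← pow_mul, mul_comm]

theorem injOn_extendedFourierNode {ω : F} (hω : IsPrimitiveRoot ω n) :
    Set.InjOn (extendedFourierNode (n := n) ω) {s | s ≠ .inl 1} := by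
  rintro (i | k) hs (i' | k') hs' h
  all_goals simp only [extendedFourierNode, Sum.elim_inl, Sum.elim_inr] at h
  · have : i ≠ 1 := fun h => hs (h ▸ rfl)
    have : i' ≠ 1 := fun h => hs' (h ▸ rfl)
    exact congrArg _ (by omega)
  · exact absurd h.symm (pow_ne_zero _ (hω.ne_zero k'.pos.ne'))
  · exact absurd h (pow_ne_zero _ (hω.ne_zero k.pos.ne'))
  · exact congrArg _ (Fin.ext (hω.pow_inj k.isLt k'.isLt h))

variable [DecidableEq F]

theorem vecMul_extendedFourierMatrix_of_ne (ω : F) (x : Fin r → F) {s : Fin 2 ⊕ Fin n}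
    (hs : s ≠ .inl 1) :
    (x ᵥ* extendedFourierMatrix ω r n) s = (ofFn r x).eval (extendedFourierNode ω s) := by
  simp [vecMul, dotProduct, extendedFourierMatrix_apply_of_ne hs, eval_ofFn]

theorem vecMul_extendedFourierMatrix_inl_one (ω : F) (x : Fin r → F) :
    (x ᵥ* extendedFourierMatrix ω r n) (.inl 1) = (ofFn r x).coeff (r - 1) := by
  simp [vecMul, dotProduct, extendedFourierMatrix, coeff_ofFn]

theorem degree_ofFn_lt_card_filter_ne_inl_one {ω : F} {c : Fin r → Fin 2 ⊕ Fin n}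
    (hc : Function.Injective c) {x : Fin r → F}
    (hx : ∀ j, (x ᵥ* extendedFourierMatrix ω r n) (c j) = 0) :
    (ofFn r x).degree < #{j | c j ≠ .inl 1} := by
  by_cases hw : ∃ j₀, c j₀ = .inl 1
  · obtain ⟨j₀, hj₀⟩ := hw
    have hJ : ({j | c j ≠ .inl 1} : Finset (Fin r)) = univ.erase j₀ := by
      ext j
      simp [← hj₀, hc.ne_iff]
    rw [hJ, card_erase_of_mem (mem_univ _), card_univ, Fintype.card_fin]
    refine degree_lt_of_coeff_pred_eq_zero (ofFn_degree_lt x) ?_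
    rw [← vecMul_extendedFourierMatrix_inl_one ω x, ← hj₀, hx]
  · rw [not_exists] at hw
    simpa [hw] using ofFn_degree_lt x

theorem eq_zero_of_vecMul_extendedFourierMatrix_submatrix_eq_zero {ω : F}
    (hω : IsPrimitiveRoot ω n) {c : Fin r → Fin 2 ⊕ Fin n} (hc : Function.Injective c)
    {x : Fin r → F} (hx : x ᵥ* (extendedFourierMatrix ω r n).submatrix id c = 0) : x = 0 := by
  have hcol : ∀ j, (x ᵥ* extendedFourierMatrix ω r n) (c j) = 0 := fun j => congrFun hx j
  set J : Finset (Fin r) := {j | c j ≠ .inl 1} with hJ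
  have hinj : Set.InjOn (extendedFourierNode ω ∘ c) J :=
    (injOn_extendedFourierNode hω).comp hc.injOn fun j hj => by simpa [hJ] using hj
  have hp : ofFn r x = 0 := by
    refine eq_zero_of_degree_lt_card_of_eval_eq_zero' _ (J.image (extendedFourierNode ω ∘ c)) ?_ ?_
    · simp only [mem_image, forall_exists_index, and_imp]
      rintro _ j hj rfl
      rw [Function.comp_apply, ← vecMul_extendedFourierMatrix_of_ne ω x (by simpa [hJ] using hj)]
      exact hcol j
    · rw [card_image_of_injOn hinj]
      exact degree_ofFn_lt_card_filter_ne_inl_one hc hcol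
  exact injective_ofFn r (hp.trans (map_zero _).symm)

end

theorem stmt7_general {F : Type*} [Field F] {n r : ℕ} {ω : F} (hω : IsPrimitiveRoot ω n) :
    ∀ c : Fin r → (Fin 2 ⊕ Fin n), Function.Injective c →
      Matrix.det
        ((Matrix.fromCols
            (Matrix.of fun (a : Fin r) (j : Fin 2) =>
              if j = 0 then (if (a : ℕ) = 0 then (1 : F) else 0)
              else (if (a : ℕ) = r - 1 then 1 else 0))
            (Matrix.of fun (a : Fin r) (j : Fin n) => ω ^ ((a : ℕ) * (j : ℕ)))).submatrix
          id c) ≠ 0 := by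
  classical
  intro c hc hdet
  obtain ⟨x, hx0, hx⟩ := exists_vecMul_eq_zero_iff.mpr hdet
  exact hx0 (eq_zero_of_vecMul_extendedFourierMatrix_submatrix_eq_zero hω hc hx)

theorem stmt7 {F : Type*} [Field F] {n r : ℕ} {ω : F} (hω : IsPrimitiveRoot ω n)
    (hr1 : 1 ≤ r) (hrn : r ≤ n) :
    ∀ c : Fin r → (Fin 2 ⊕ Fin n), Function.Injective c →
      Matrix.det
        ((Matrix.fromCols
            (Matrix.of fun (a : Fin r) (j : Fin 2) =>
              if j = 0 then (if (a : ℕ) = 0 then (1 : F) else 0)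
              else (if (a : ℕ) = r - 1 then 1 else 0))
            (Matrix.of fun (a : Fin r) (j : Fin n) => ω ^ ((a : ℕ) * (j : ℕ)))).submatrix
          id c) ≠ 0 :=
  stmt7_general hω
end

section
/- Let q = 2^n with n ≥ 2, F = GF(q), and ω a primitive (q−1)-th root of unity in F. Let A be the 3×(q−1) matrix with (r,c) entry ω^(r·c), and B = (I₃ | A). Then B generates an MDS [q+2, 3] code over F: every 3×3 column-submatrix of B is invertible. -/
/-!
The columns of `(I₃ | A)` are the points `(1, t, t²)`, `t ∈ F^×`, of the conic `y² = xz`, its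
point `(1, 0, 0)` at `t = 0`, its point at infinity `(0, 0, 1)`, and `(0, 1, 0)`. In characteristic 2
the last one is the nucleus of the conic: the tangent at `(1, t, t²)` is `t²x + z = 0`, and all
tangents pass through `(0, 1, 0)`. So the `q + 2` columns form a hyperoval, and no three of them
are collinear. Concretely, up to sign every `3 × 3` minor is a Vandermonde determinant, or one of
`s t (t - s)`, `(s - t)²`, `t - s` (one unit column), or a coordinate `1, s, s²` (two unit columns),
or `1` (three unit columns).
-/

open Matrix Function

namespace Matrix

variable {R : Type*} [CommRing R]

theorem det_of_vec3_swap₀₁ (u v w : Fin 3 → R) : det (of ![v, u, w]) = -det (of ![u, v, w]) := by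
  simp [det_fin_three]; ring

theorem det_of_vec3_swap₀₂ (u v w : Fin 3 → R) : det (of ![w, v, u]) = -det (of ![u, v, w]) := by
  simp [det_fin_three]; ring

theorem det_of_vec3_swap₁₂ (u v w : Fin 3 → R) : det (of ![u, w, v]) = -det (of ![u, v, w]) := by
  simp [det_fin_three]; ring

end Matrix

namespace Hyperoval

variable {F ι : Type*} [Field F]

def conicPoint (t : F) : Fin 3 → F := ![1, t, t ^ 2]

def point (x : ι → F) : Fin 3 ⊕ ι → Fin 3 → F
  | .inl i => Pi.single i 1
  | .inr b => conicPoint (x b)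

theorem transpose_fromCols_one (x : ι → F) :
    (fromCols 1 (of fun (a : Fin 3) b => x b ^ (a : ℕ)))ᵀ = of (point x) := by
  ext (i | b) a <;> fin_cases a <;> simp [point, conicPoint, one_apply, Pi.single_apply, eq_comm]

theorem det_conicPoint (s t u : F) :
    det (of ![conicPoint s, conicPoint t, conicPoint u]) = (t - s) * (u - s) * (u - t) := by
  simp [det_fin_three, conicPoint]; ring

theorem det_single_conicPoint_conicPoint_ne_zero [CharP F 2] (i : Fin 3) {s t : F} (hs : s ≠ 0)
    (ht : t ≠ 0) (hst : s ≠ t) :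
    det (of ![Pi.single i 1, conicPoint s, conicPoint t]) ≠ 0 := by
  have hts : t - s ≠ 0 := sub_ne_zero.2 hst.symm
  fin_cases i
  · have : det (of ![Pi.single 0 1, conicPoint s, conicPoint t]) = s * t * (t - s) := by
      simp [det_fin_three, conicPoint]; ring
    simpa [this] using ⟨⟨hs, ht⟩, hts⟩
  · -- the nucleus `(0, 1, 0)` lies on no secant of the conic
    have : det (of ![Pi.single 1 1, conicPoint s, conicPoint t]) = (s - t) ^ 2 := by
      rw [sub_pow_char]; simp [det_fin_three, conicPoint]; ring
    simpa [this, sub_eq_zero] using hst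
  · have : det (of ![Pi.single 2 1, conicPoint s, conicPoint t]) = t - s := by
      simp [det_fin_three, conicPoint]
    simpa [this] using hts

theorem det_single_single_conicPoint_ne_zero {i j : Fin 3} (hij : i ≠ j) {s : F} (hs : s ≠ 0) :
    det (of ![Pi.single i 1, Pi.single j 1, conicPoint s]) ≠ 0 := by
  fin_cases i <;> fin_cases j <;> simp_all [det_fin_three, conicPoint]

theorem det_single_single_single_ne_zero {i j k : Fin 3} (hij : i ≠ j) (hik : i ≠ k)
    (hjk : j ≠ k) : det (of ![Pi.single i (1 : F), Pi.single j 1, Pi.single k 1]) ≠ 0 := by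
  fin_cases i <;> fin_cases j <;> fin_cases k <;> simp_all [det_fin_three]

theorem det_point_ne_zero [CharP F 2] {x : ι → F} (hx : Injective x) (hx0 : ∀ b, x b ≠ 0)
    {p q r : Fin 3 ⊕ ι} (hpq : p ≠ q) (hpr : p ≠ r) (hqr : q ≠ r) :
    det (of ![point x p, point x q, point x r]) ≠ 0 := by
  have hx' : ∀ {a b}, Sum.inr a ≠ (Sum.inr b : Fin 3 ⊕ ι) → x a ≠ x b :=
    fun h => hx.ne fun hab => h (congrArg _ hab)
  rcases p with i | a <;> rcases q with j | b <;> rcases r with k | c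
  · exact det_single_single_single_ne_zero (by simpa using hpq) (by simpa using hpr)
      (by simpa using hqr)
  · exact det_single_single_conicPoint_ne_zero (by simpa using hpq) (hx0 c)
  · rw [← neg_ne_zero, ← det_of_vec3_swap₁₂]
    exact det_single_single_conicPoint_ne_zero (by simpa using hpr) (hx0 b)
  · exact det_single_conicPoint_conicPoint_ne_zero i (hx0 b) (hx0 c) (hx' hqr)
  · rw [← neg_ne_zero, ← det_of_vec3_swap₀₂]
    exact det_single_single_conicPoint_ne_zero (by simpa using hqr.symm) (hx0 a)
  · rw [← neg_ne_zero, ← det_of_vec3_swap₀₁]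
    exact det_single_conicPoint_conicPoint_ne_zero j (hx0 a) (hx0 c) (hx' hpr)
  · rw [← neg_ne_zero, ← det_of_vec3_swap₀₂]
    exact det_single_conicPoint_conicPoint_ne_zero k (hx0 b) (hx0 a) (hx' hpq.symm)
  · simp only [point, det_conicPoint, ne_eq, mul_eq_zero, sub_eq_zero, not_or]
    exact ⟨⟨(hx' hpq).symm, (hx' hpr).symm⟩, (hx' hqr).symm⟩

theorem det_fromCols_one_submatrix_ne_zero [CharP F 2] {x : ι → F} (hx : Injective x)
    (hx0 : ∀ b, x b ≠ 0) {c : Fin 3 → Fin 3 ⊕ ι} (hc : Injective c) :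
    ((fromCols 1 (of fun (a : Fin 3) b => x b ^ (a : ℕ))).submatrix id c).det ≠ 0 := by
  have hrows : ((fromCols 1 (of fun (a : Fin 3) b => x b ^ (a : ℕ))).submatrix id c)ᵀ =
      of ![point x (c 0), point x (c 1), point x (c 2)] := by
    rw [transpose_submatrix, transpose_fromCols_one]
    ext k a; fin_cases k <;> rfl
  rw [← det_transpose, hrows]
  exact det_point_ne_zero hx hx0 (hc.ne (by decide)) (hc.ne (by decide)) (hc.ne (by decide))

end Hyperoval

theorem stmt10_general (n : ℕ) (ω : GaloisField 2 n)
    (hω : IsPrimitiveRoot ω (2 ^ n - 1)) :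
    ∀ c : Fin 3 → (Fin 3 ⊕ Fin (2 ^ n - 1)), Function.Injective c →
      Matrix.det
        ((Matrix.fromCols (1 : Matrix (Fin 3) (Fin 3) (GaloisField 2 n))
            (Matrix.of fun (a : Fin 3) (b : Fin (2 ^ n - 1)) =>
              ω ^ ((a : ℕ) * (b : ℕ)))).submatrix id c) ≠ 0 := by
  intro c hc
  simp_rw [pow_mul']
  refine Hyperoval.det_fromCols_one_submatrix_ne_zero (x := fun b : Fin (2 ^ n - 1) => ω ^ (b : ℕ))
    (fun a b h => Fin.ext (hω.pow_inj a.isLt b.isLt h)) (fun b => ?_) hc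
  exact pow_ne_zero _ (hω.ne_zero (Nat.ne_zero_of_lt b.isLt))

theorem stmt10 (n : ℕ) (hn : 2 ≤ n) (ω : GaloisField 2 n)
    (hω : IsPrimitiveRoot ω (2 ^ n - 1)) :
    ∀ c : Fin 3 → (Fin 3 ⊕ Fin (2 ^ n - 1)), Function.Injective c →
      Matrix.det
        ((Matrix.fromCols (1 : Matrix (Fin 3) (Fin 3) (GaloisField 2 n))
            (Matrix.of fun (a : Fin 3) (b : Fin (2 ^ n - 1)) =>
              ω ^ ((a : ℕ) * (b : ℕ)))).submatrix id c) ≠ 0 :=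
  stmt10_general n ω hω
end

section
/- Let G = (I_r | A) be an r×n matrix over a field such that every j×j submatrix of A is invertible for all 1 ≤ j ≤ r. Then every r×r column-submatrix of G is invertible. -/
/-!
A chosen identity column is a unit vector, so Laplace expansion along it deletes it together with
the row of its `1`, leaving a matrix of the same shape `(I | A')` with `A'` obtained from `A` by
deleting that row; every minor of `A'` is a minor of `A`. Once no identity column is left, the
chosen matrix is a maximal square submatrix of `A`.
-/

open Function

namespace Matrix

variable {R : Type*} [CommRing R]

theorem det_succ_of_col_eq_single {n : ℕ} (M : Matrix (Fin (n + 1)) (Fin (n + 1)) R)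
    {i k : Fin (n + 1)} (hk : ∀ i', M i' k = if i' = i then 1 else 0) :
    M.det = (-1) ^ (i + k : ℕ) * (M.submatrix i.succAbove k.succAbove).det := by
  rw [det_succ_column M k, Finset.sum_eq_single i (fun i' _ hi' => by simp [hk, hi']) (by simp),
    hk, if_pos rfl, mul_one]

theorem fromCols_one_submatrix_sumMap {ι ι' κ : Type*} [DecidableEq ι] [DecidableEq ι']
    (A : Matrix ι κ R) {ρ : ι' → ι} (hρ : Injective ρ) :
    (fromCols (1 : Matrix ι ι R) A).submatrix ρ (Sum.map ρ id) = fromCols 1 (A.submatrix ρ id) := by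
  ext p (q | q)
  · simp [one_apply, hρ.eq_iff]
  · simp

end Matrix

namespace Fin

theorem exists_sumMap_succAbove_eq {n : ℕ} {β : Type*} {i : Fin (n + 1)}
    {y : Fin (n + 1) ⊕ β} (hy : y ≠ Sum.inl i) : ∃ x, Sum.map i.succAbove id x = y := by
  rcases y with y | b
  · obtain ⟨z, rfl⟩ := exists_succAbove_eq fun h => hy (congrArg Sum.inl h)
    exact ⟨Sum.inl z, rfl⟩
  · exact ⟨Sum.inr b, rfl⟩

theorem exists_injective_sumMap_succAbove_comp_eq {n : ℕ} {β : Type*}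
    {c : Fin (n + 1) → Fin (n + 1) ⊕ β} (hc : Injective c) {i k : Fin (n + 1)}
    (hki : c k = Sum.inl i) :
    ∃ c' : Fin n → Fin n ⊕ β, Injective c' ∧ Sum.map i.succAbove id ∘ c' = c ∘ k.succAbove := by
  choose c' hc' using fun q => exists_sumMap_succAbove_eq
    (hki ▸ hc.ne (k.succAbove_ne q) : c (k.succAbove q) ≠ Sum.inl i)
  have hcomp : Sum.map i.succAbove id ∘ c' = c ∘ k.succAbove := funext hc'
  exact ⟨c', (hcomp ▸ hc.comp succAbove_right_injective).of_comp, hcomp⟩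

end Fin

namespace Matrix

variable {R : Type*} [CommRing R] {m : ℕ}

def IsSuperregular {r : ℕ} (A : Matrix (Fin r) (Fin m) R) : Prop :=
  ∀ j : ℕ, 1 ≤ j → j ≤ r →
    ∀ (rows : Fin j → Fin r) (cols : Fin j → Fin m),
      Injective rows → Injective cols → (A.submatrix rows cols).det ≠ 0

theorem IsSuperregular.submatrix_rows {r n : ℕ} {A : Matrix (Fin r) (Fin m) R}
    (hA : A.IsSuperregular) {ρ : Fin n → Fin r} (hρ : Injective ρ) :
    (A.submatrix ρ id).IsSuperregular := by
  intro j hj hjn rows cols hrows hcols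
  rw [submatrix_submatrix]
  exact hA j hj (hjn.trans (Fin.le_of_injective ρ hρ)) _ _ (hρ.comp hrows) hcols

theorem IsSuperregular.det_fromCols_one_submatrix_ne_zero [Nontrivial R] :
    ∀ {r : ℕ} {A : Matrix (Fin r) (Fin m) R}, A.IsSuperregular →
      ∀ c : Fin r → Fin r ⊕ Fin m, Injective c → ((fromCols 1 A).submatrix id c).det ≠ 0
  | 0, _, _, _, _ => by simp
  | n + 1, A, hA, c, hc => by
    by_cases hinl : ∃ k i, c k = Sum.inl i
    · obtain ⟨k, i, hki⟩ := hinl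
      obtain ⟨c', hc'_inj, hc'⟩ := Fin.exists_injective_sumMap_succAbove_comp_eq hc hki
      have hcol : ∀ i', (fromCols 1 A).submatrix id c i' k = if i' = i then 1 else 0 := by
        simp [hki, one_apply, eq_comm]
      have hminor : ((fromCols 1 A).submatrix id c).submatrix i.succAbove k.succAbove =
          (fromCols 1 (A.submatrix i.succAbove id)).submatrix id c' := by
        rw [submatrix_submatrix, ← hc',
          ← fromCols_one_submatrix_sumMap A Fin.succAbove_right_injective, submatrix_submatrix]
        rfl
      rw [det_succ_of_col_eq_single _ hcol, hminor, Ne, neg_one_pow_mul_eq_zero_iff]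
      exact (hA.submatrix_rows Fin.succAbove_right_injective).det_fromCols_one_submatrix_ne_zero
        c' hc'_inj
    · have hinr : ∀ k, ∃ j, c k = Sum.inr j := fun k => by
        rcases hk : c k with i | j
        · exact absurd ⟨k, i, hk⟩ hinl
        · exact ⟨j, rfl⟩
      choose g hg using hinr
      obtain rfl : c = Sum.inr ∘ g := funext hg
      exact hA (n + 1) n.succ_pos le_rfl id g injective_id hc.of_comp

end Matrix

theorem stmt13 {F : Type*} [Field F] {r m : ℕ} (A : Matrix (Fin r) (Fin m) F)
    (hA : ∀ j : ℕ, 1 ≤ j → j ≤ r →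
      ∀ (rows : Fin j → Fin r) (cols : Fin j → Fin m),
        Function.Injective rows → Function.Injective cols →
          Matrix.det (A.submatrix rows cols) ≠ 0) :
    ∀ c : Fin r → (Fin r ⊕ Fin m), Function.Injective c →
      Matrix.det ((Matrix.fromCols (1 : Matrix (Fin r) (Fin r) F) A).submatrix id c) ≠ 0 :=
  Matrix.IsSuperregular.det_fromCols_one_submatrix_ne_zero (A := A) hA
end

section
/- Suppose there exists an MDS [n, 3] code over GF(q). Then n ≤ q + 2. -/
/-- 3×3 determinant of the matrix with columns `a, b, c`. -/
private def det3 {F : Type*} [Field F] (a b c : Fin 3 → F) : F :=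
  a 0 * b 1 * c 2 - a 0 * b 2 * c 1 - a 1 * b 0 * c 2
    + a 1 * b 2 * c 0 + a 2 * b 0 * c 1 - a 2 * b 1 * c 0

private lemma det3_key {F : Type*} [Field F] (a e f u v : Fin 3 → F) :
    det3 a e u * det3 a f v - det3 a f u * det3 a e v = det3 a e f * det3 a u v := by
  simp only [det3]
  ring

theorem stmt14 {F : Type*} [Field F] [Fintype F] {q n : ℕ} (hF : Fintype.card F = q)
    (G : Matrix (Fin 3) (Fin n) F)
    (hG : ∀ c : Fin 3 → Fin n, Function.Injective c →
      Matrix.det (G.submatrix id c) ≠ 0) :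
    n ≤ q + 2 := by
  classical
  rcases le_or_gt n 2 with h | h
  · omega
  set col : Fin n → Fin 3 → F := fun j i => G i j with hcol
  have hD : ∀ j₀ j₁ j₂ : Fin n, j₀ ≠ j₁ → j₀ ≠ j₂ → j₁ ≠ j₂ →
      det3 (col j₀) (col j₁) (col j₂) ≠ 0 := by
    intro j₀ j₁ j₂ h01 h02 h12
    have hinj : Function.Injective ![j₀, j₁, j₂] := by
      intro a b hab
      fin_cases a <;> fin_cases b <;> simp_all [Fin.ext_iff]
    have heq : (G.submatrix id ![j₀, j₁, j₂]).det = det3 (col j₀) (col j₁) (col j₂) := by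
      rw [Matrix.det_fin_three]
      simp only [det3, Matrix.submatrix_apply, id_eq, Matrix.cons_val_zero, Matrix.cons_val_one,
        Matrix.head_cons, Matrix.cons_val_two, Matrix.tail_cons, hcol]
      ring
    have := hG ![j₀, j₁, j₂] hinj
    rw [heq] at this
    exact this
  set j0 : Fin n := ⟨0, by omega⟩
  set j1 : Fin n := ⟨1, by omega⟩
  set j2 : Fin n := ⟨2, by omega⟩
  have h01 : j0 ≠ j1 := by simp [j0, j1, Fin.ext_iff]
  have h02 : j0 ≠ j2 := by simp [j0, j2, Fin.ext_iff]
  have h12 : j1 ≠ j2 := by simp [j1, j2, Fin.ext_iff]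
  set a : Fin 3 → F := col j0
  set e : Fin 3 → F := col j1
  set f : Fin 3 → F := col j2
  have haef : det3 a e f ≠ 0 := hD j0 j1 j2 h01 h02 h12
  -- map each index ≠ j0 to a point of the projective line
  set x : Fin n → F := fun i => det3 a e (col i)
  set y : Fin n → F := fun i => det3 a f (col i)
  have hcross : ∀ i j : Fin n, i ≠ j0 → j ≠ j0 → i ≠ j →
      x i * y j - y i * x j ≠ 0 := by
    intro i j hi hj hij
    have h1 : det3 a (col i) (col j) ≠ 0 := hD j0 i j (Ne.symm hi) (Ne.symm hj) hij
    have := det3_key a e f (col i) (col j)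
    simp only [x, y]
    rw [this]
    exact mul_ne_zero haef h1
  set ψ : {i : Fin n // i ≠ j0} → Option F := fun i =>
    if y i.1 = 0 then none else some (x i.1 * (y i.1)⁻¹)
  have hψ : Function.Injective ψ := by
    rintro ⟨i, hi⟩ ⟨j, hj⟩ hij
    by_contra hne
    have hne' : i ≠ j := fun h => hne (by simpa using h)
    have hc := hcross i j hi hj hne'
    simp only [ψ] at hij
    by_cases hyi : y i = 0 <;> by_cases hyj : y j = 0
    · exact hc (by rw [hyi, hyj]; ring)
    · simp [hyi, hyj] at hij
    · simp [hyi, hyj] at hij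
    · rw [if_neg hyi, if_neg hyj] at hij
      have : x i * (y i)⁻¹ = x j * (y j)⁻¹ := by simpa using hij
      apply hc
      field_simp at this
      rw [this]; ring
  have hcard := Fintype.card_le_of_injective ψ hψ
  have hc1 : Fintype.card {i : Fin n // i ≠ j0} = n - 1 := by
    rw [Fintype.card_subtype_compl, Fintype.card_subtype_eq, Fintype.card_fin]
  have hc2 : Fintype.card (Option F) = q + 1 := by
    simp [hF]
  rw [hc1, hc2] at hcard
  omega
end

section
/- Suppose q is odd and there exists an MDS [n, 3] code over GF(q). Then n ≤ q + 1. -/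
/-!
Take the first three columns of a generator matrix as a basis, so that they become the identity
and every further column has all three coordinates nonzero. If there are `q + 2` columns, the
`q - 1` remaining ones give, for each pair of rows `r ≠ s`, ratios `H s j / H r j` which are
pairwise distinct (a repetition is a vanishing `3 × 3` minor), hence run exactly once through
`Fˣ`. By Wilson's theorem in `F` each of the three products of ratios is `-1`; but the `(0, 2)`
product is the product of the `(0, 1)` and `(1, 2)` ones, so `-1 = 1` and `q` is even.
-/

open Finset Function Matrix

theorem FiniteField.prod_eq_neg_one_of_injective {F ι : Type*} [Field F] [Fintype F] [Fintype ι]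
    {f : ι → F} (hf : Injective f) (h0 : ∀ i, f i ≠ 0)
    (hcard : Fintype.card ι = Fintype.card F - 1) : ∏ i, f i = -1 := by
  classical
  let g : ι → Fˣ := fun i => Units.mk0 (f i) (h0 i)
  have hg : Bijective g := by
    rw [Fintype.bijective_iff_injective_and_card, Fintype.card_units, hcard]
    exact ⟨fun i j h => hf (congrArg Units.val h), rfl⟩
  calc ∏ i, f i = ((∏ i, g i : Fˣ) : F) := by simp [g]
    _ = ((∏ u : Fˣ, u : Fˣ) : F) := by
      rw [Fintype.prod_bijective g hg (fun i => g i) id fun _ => rfl]; rfl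
    _ = -1 := by simp [prod_univ_units_id_eq_neg_one]

namespace Matrix

variable {F m ι ι' : Type*} [Field F] [Fintype m] [DecidableEq m]

def MaximalMinorsNeZero (G : Matrix m ι F) : Prop :=
  ∀ c : m → ι, Injective c → (G.submatrix id c).det ≠ 0

namespace MaximalMinorsNeZero

theorem submatrix_col {G : Matrix m ι F} (hG : G.MaximalMinorsNeZero) {f : ι' → ι}
    (hf : Injective f) : (G.submatrix id f).MaximalMinorsNeZero :=
  fun c hc => hG (f ∘ c) (hf.comp hc)

theorem mul_left {G : Matrix m ι F} (hG : G.MaximalMinorsNeZero) {A : Matrix m m F}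
    (hA : A.det ≠ 0) : (A * G).MaximalMinorsNeZero := fun c hc => by
  rw [show (A * G).submatrix id c = A * G.submatrix id c from rfl, det_mul]
  exact mul_ne_zero hA (hG c hc)

theorem exists_submatrix_inl_eq_one {G : Matrix m (m ⊕ ι) F} (hG : G.MaximalMinorsNeZero) :
    ∃ H : Matrix m (m ⊕ ι) F, H.MaximalMinorsNeZero ∧ H.submatrix id Sum.inl = 1 := by
  set M := G.submatrix id Sum.inl
  have hM : M.det ≠ 0 := hG _ Sum.inl_injective
  refine ⟨M⁻¹ * G, hG.mul_left ?_, nonsing_inv_mul M (isUnit_iff_ne_zero.2 hM)⟩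
  simpa [det_nonsing_inv] using hM

variable {H : Matrix m (m ⊕ ι) F}

theorem apply_inr_ne_zero (hH : H.MaximalMinorsNeZero) (h1 : H.submatrix id Sum.inl = 1)
    (r : m) (j : ι) : H r (Sum.inr j) ≠ 0 := by
  have hc : Injective (update Sum.inl r (Sum.inr j) : m → m ⊕ ι) := by
    intro a b hab
    by_cases ha : a = r <;> by_cases hb : b = r <;> simp_all [update_of_ne]
  have hminor : H.submatrix id (update Sum.inl r (Sum.inr j)) =
      updateCol 1 r (fun i => H i (.inr j)) := by
    ext i k
    by_cases hk : k = r
    · subst hk; simp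
    · simp [hk, ← h1]
  have := hH _ hc
  rwa [hminor, ← cramer_apply, cramer_one] at this

variable {H : Matrix (Fin 3) (Fin 3 ⊕ ι) F}

theorem mul_ne_mul (hH : H.MaximalMinorsNeZero) (h1 : H.submatrix id Sum.inl = 1)
    {r s : Fin 3} (hrs : r ≠ s) {j k : ι} (hjk : j ≠ k) :
    H r (.inr j) * H s (.inr k) ≠ H r (.inr k) * H s (.inr j) := by
  obtain ⟨t, htr, hts⟩ : ∃ t, t ≠ r ∧ t ≠ s := by
    fin_cases r <;> fin_cases s <;> simp_all <;> decide
  have hc : Injective (![.inr j, .inr k, .inl t] : Fin 3 → Fin 3 ⊕ ι) := by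
    intro a b hab
    fin_cases a <;> fin_cases b <;> simp_all
  have hcol i u : H i (.inl u) = (1 : Matrix (Fin 3) (Fin 3) F) i u := by rw [← h1]; rfl
  intro h
  apply hH _ hc
  fin_cases r <;> fin_cases s <;> fin_cases t <;> simp_all [det_fin_three, one_apply] <;>
    first | linear_combination h | linear_combination -h

theorem div_injective (hH : H.MaximalMinorsNeZero) (h1 : H.submatrix id Sum.inl = 1)
    {r s : Fin 3} (hrs : r ≠ s) : Injective fun j => H s (.inr j) / H r (.inr j) := by
  intro j k h
  by_contra hjk
  apply hH.mul_ne_mul h1 hrs.symm hjk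
  rwa [div_eq_div_iff (hH.apply_inr_ne_zero h1 r j) (hH.apply_inr_ne_zero h1 r k)] at h

theorem ringChar_eq_two [Fintype F] [Fintype ι] (hH : H.MaximalMinorsNeZero)
    (h1 : H.submatrix id Sum.inl = 1) (hcard : Fintype.card ι = Fintype.card F - 1) :
    ringChar F = 2 := by
  have hprod {r s : Fin 3} (hrs : r ≠ s) : ∏ j, H s (.inr j) / H r (.inr j) = -1 :=
    FiniteField.prod_eq_neg_one_of_injective (hH.div_injective h1 hrs)
      (fun j => div_ne_zero (hH.apply_inr_ne_zero h1 s j) (hH.apply_inr_ne_zero h1 r j)) hcard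
  have hsplit : ∏ j, H 0 (.inr j) / H 2 (.inr j) =
      (∏ j, H 0 (.inr j) / H 1 (.inr j)) * ∏ j, H 1 (.inr j) / H 2 (.inr j) := by
    rw [← prod_mul_distrib]
    exact prod_congr rfl fun j _ => (div_mul_div_cancel₀ (hH.apply_inr_ne_zero h1 1 j)).symm
  rw [hprod (by decide), hprod (by decide), hprod (by decide), neg_one_mul, neg_neg] at hsplit
  exact neg_one_eq_one_iff.1 hsplit

end MaximalMinorsNeZero

end Matrix

theorem stmt15 {F : Type*} [Field F] [Fintype F] {q n : ℕ} (hF : Fintype.card F = q)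
    (hq : Odd q) (G : Matrix (Fin 3) (Fin n) F)
    (hG : ∀ c : Fin 3 → Fin n, Function.Injective c →
      Matrix.det (G.submatrix id c) ≠ 0) :
    n ≤ q + 1 := by
  by_contra! hn
  have hq0 := hq.pos
  have hemb : Injective
      (Fin.castLE (by omega) ∘ finSumFinEquiv : Fin 3 ⊕ Fin (q - 1) → Fin n) :=
    (Fin.castLE_injective _).comp finSumFinEquiv.injective
  obtain ⟨H, hH, h1⟩ :=
    ((show G.MaximalMinorsNeZero from hG).submatrix_col hemb).exists_submatrix_inl_eq_one
  have hchar : ringChar F = 2 := hH.ringChar_eq_two h1 (by simp [hF])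
  have heven : q % 2 = 0 := hF ▸ FiniteField.even_card_of_char_two hchar
  rw [Nat.odd_iff] at hq
  omega
end

section
/- Suppose q is even and there exists an MDS [n, n−3] code over GF(q) with n ≥ 4. Then n ≤ q + 2; moreover if q is odd then n ≤ q + 1. -/
/-!
The kernel `K` of `G` is the dual `[n, 3]` code. A codeword of `K` vanishing at three coordinates
vanishes everywhere, because the remaining `n - 3` columns of `G` form an invertible matrix; hence
`K` is `3`-dimensional and the coordinate functionals `x ↦ x i` form an arc in the plane
`ℙ(Dual K)`: no three of them are linearly dependent.

For an arc `v` in a `3`-dimensional space over `GF(q)`, projecting from one arc point `v i` onto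
the projective line `ℙ(V ⧸ ⟨v i⟩)`, which has `q + 1` points, is injective on the other arc points,
so `n ≤ q + 2`. If `n = q + 2` these projections are bijective. Then for a point `u` off the arc,
every line through `u` meeting the arc meets it in exactly two points, so the arc points come in
pairs and `n` is even, i.e. `q` is even.
-/

open Module Submodule Function
open scoped LinearAlgebra.Projectivization Matrix

section

variable {F V ι : Type*} [Field F] [AddCommGroup V] [Module F V]

variable (F) in
def IsArc (v : ι → V) : Prop :=
  ∀ ⦃i j k⦄, i ≠ j → i ≠ k → j ≠ k → v k ∉ span F {v i, v j}

theorem natCard_subtype_ne [Fintype ι] (i : ι) : Nat.card {j // j ≠ i} = Fintype.card ι - 1 := by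
  classical
  simp [Nat.card_eq_fintype_card]

theorem mem_span_singleton_comm {x y : V} (hx : x ≠ 0) (h : x ∈ span F {y}) : y ∈ span F {x} := by
  obtain ⟨a, rfl⟩ := mem_span_singleton.mp h
  have ha : a ≠ 0 := by rintro rfl; simp at hx
  exact mem_span_singleton.mpr ⟨a⁻¹, by rw [smul_smul, inv_mul_cancel₀ ha, one_smul]⟩

theorem mkQ_span_singleton_ne_zero {a b : V} (h : b ∉ span F {a}) : (span F {a}).mkQ b ≠ 0 := by
  rwa [Ne, mkQ_apply, Quotient.mk_eq_zero]

theorem mem_span_pair_of_mk_mkQ_eq {c a b : V} (ha : (span F {c}).mkQ a ≠ 0)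
    (hb : (span F {c}).mkQ b ≠ 0) (h : Projectivization.mk F _ ha = Projectivization.mk F _ hb) :
    a ∈ span F {c, b} := by
  obtain ⟨t, ht⟩ := (Projectivization.mk_eq_mk_iff' F _ _ ha hb).mp h
  rw [← map_smul, ← sub_eq_zero, ← map_sub, mkQ_apply, Quotient.mk_eq_zero,
    mem_span_singleton] at ht
  obtain ⟨s, hs⟩ := ht
  exact mem_span_pair.mpr ⟨-s, t, by rw [neg_smul, hs]; abel⟩

theorem finrank_quotient_span_singleton [FiniteDimensional F V] {x : V} (hx : x ≠ 0) :
    finrank F (V ⧸ span F {x}) = finrank F V - 1 := by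
  rw [finrank_quotient, finrank_span_singleton hx]

theorem exists_forall_notMem_span_singleton [Finite F] [FiniteDimensional F V] [Fintype ι]
    {v : ι → V} (hv : ∀ i, v i ≠ 0) (hcard : Fintype.card ι < Nat.card (ℙ F V)) :
    ∃ u, ∀ i, u ∉ span F {v i} := by
  have : Finite V := Module.finite_of_finite F
  have hns : ¬ Surjective fun i => Projectivization.mk F (v i) (hv i) := fun h => by
    simpa [Nat.card_eq_fintype_card] using (Nat.card_le_card_of_surjective _ h).trans_lt' hcard
  obtain ⟨p, hp⟩ := not_forall.mp hns
  refine ⟨p.rep, fun i hi => hp ⟨i, ?_⟩⟩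
  rw [← p.mk_rep, Projectivization.mk_eq_mk_iff']
  exact mem_span_singleton.mp (mem_span_singleton_comm p.rep_nonzero hi)

namespace IsArc

variable {v : ι → V} [Fintype ι]

theorem notMem_span_singleton (hv : IsArc F v) (hι : 2 < Fintype.card ι) {i j : ι} (hij : i ≠ j) :
    v j ∉ span F {v i} := by
  classical
  obtain ⟨k, -, hk⟩ := Finset.exists_mem_notMem_of_card_lt_card
    (s := {i, j}) (t := Finset.univ) (Finset.card_le_two.trans_lt hι)
  simp only [Finset.mem_insert, Finset.mem_singleton, not_or] at hk
  exact fun h => hv (Ne.symm hk.1) hij hk.2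
    (span_mono (Set.singleton_subset_iff.mpr (Set.mem_insert _ _)) h)

theorem ne_zero (hv : IsArc F v) (hι : 2 < Fintype.card ι) (i : ι) : v i ≠ 0 := by
  obtain ⟨j, hj⟩ := Fintype.exists_ne_of_one_lt_card (by omega) i
  exact fun h => hv.notMem_span_singleton hι hj (h ▸ zero_mem _)

noncomputable def projectFrom (hv : IsArc F v) (hι : 2 < Fintype.card ι) (i : ι) :
    {j // j ≠ i} → ℙ F (V ⧸ span F {v i}) :=
  fun j => Projectivization.mk F _
    (mkQ_span_singleton_ne_zero (hv.notMem_span_singleton hι j.2.symm))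

theorem projectFrom_injective (hv : IsArc F v) (hι : 2 < Fintype.card ι) (i : ι) :
    Injective (hv.projectFrom hι i) := by
  intro j j' h
  by_contra hjj'
  exact hv (Ne.symm j'.2) (Ne.symm j.2) (fun h => hjj' (Subtype.ext h.symm))
    (mem_span_pair_of_mk_mkQ_eq _ _ h)

theorem eq_of_mem_span_pair (hv : IsArc F v) (hι : 2 < Fintype.card ι) {i j k : ι} (hji : j ≠ i)
    (hki : k ≠ i) {u : V} (hj : v j ∈ span F {v i, u}) (hk : v k ∈ span F {v i, u}) : j = k := by
  by_contra hjk
  rw [Set.pair_comm] at hj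
  have hu : u ∈ span F {v j, v i} :=
    mem_span_insert_exchange hj (hv.notMem_span_singleton hι hji.symm)
  have hspan : span F {v i, u} ≤ span F {v j, v i} :=
    span_le.mpr (Set.insert_subset (subset_span (by simp)) (Set.singleton_subset_iff.mpr hu))
  exact hv hji hjk hki.symm (hspan hk)

variable [Finite F] [FiniteDimensional F V]

theorem card_projectivization_quotient (hv : IsArc F v) (hι : 2 < Fintype.card ι)
    (hV : finrank F V = 3) (i : ι) : Nat.card (ℙ F (V ⧸ span F {v i})) = Nat.card F + 1 :=
  Projectivization.card_of_finrank_two _ _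
    (by rw [finrank_quotient_span_singleton (hv.ne_zero hι i), hV])

theorem card_le (hv : IsArc F v) (hV : finrank F V = 3) : Fintype.card ι ≤ Nat.card F + 2 := by
  by_cases hι : 2 < Fintype.card ι
  · obtain ⟨i⟩ : Nonempty ι := Fintype.card_pos_iff.mp (by omega)
    have : Finite (V ⧸ span F {v i}) := Module.finite_of_finite F
    have := Nat.card_le_card_of_injective _ (hv.projectFrom_injective hι i)
    rw [hv.card_projectivization_quotient hι hV, natCard_subtype_ne] at this
    omega
  · omega

theorem projectFrom_bijective (hv : IsArc F v) (hι : 2 < Fintype.card ι) (hV : finrank F V = 3)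
    (hcard : Fintype.card ι = Nat.card F + 2) (i : ι) : Bijective (hv.projectFrom hι i) := by
  have : Finite (V ⧸ span F {v i}) := Module.finite_of_finite F
  refine (Nat.bijective_iff_injective_and_card _).mpr ⟨hv.projectFrom_injective hι i, ?_⟩
  rw [hv.card_projectivization_quotient hι hV, natCard_subtype_ne]
  omega

theorem even_card_of_card_eq (hv : IsArc F v) (hV : finrank F V = 3)
    (hcard : Fintype.card ι = Nat.card F + 2) : Even (Fintype.card ι) := by
  classical
  have hq : 1 < Nat.card F := Finite.one_lt_card
  have hι : 2 < Fintype.card ι := by omega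
  obtain ⟨u, hu⟩ := exists_forall_notMem_span_singleton (hv.ne_zero hι) (by
    rw [Projectivization.card_of_finrank F V hV, hcard]
    simp only [Finset.sum_range_succ, Finset.sum_range_zero]
    nlinarith)
  have hvu : ∀ i, v i ∉ span F {u} := fun i h => hu i (mem_span_singleton_comm (hv.ne_zero hι i) h)
  have partner : ∀ i, ∃ j ≠ i, v j ∈ span F {v i, u} := by
    intro i
    obtain ⟨j, hj⟩ := (hv.projectFrom_bijective hι hV hcard i).2
      (Projectivization.mk F _ (mkQ_span_singleton_ne_zero (hu i)))
    exact ⟨j, j.2, mem_span_pair_of_mk_mkQ_eq _ _ hj⟩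
  choose σ hσne hσ using partner
  -- `v i` lies on the line through `u` and `v (σ i)`, which holds at most two arc points.
  have hσσ : Involutive σ := fun i =>
    hv.eq_of_mem_span_pair hι (hσne (σ i)) (hσne i).symm (hσ (σ i))
      (mem_span_insert_exchange (hσ i) (hvu (σ i)))
  have hsupp : hσσ.toPerm.support = Finset.univ :=
    Finset.eq_univ_of_forall fun i => Equiv.Perm.mem_support.mpr (hσne i)
  rw [even_iff_two_dvd, ← Finset.card_univ, ← hsupp]
  exact Equiv.Perm.two_dvd_card_support (by ext i; simp [sq, hσσ i])

theorem card_le_of_odd (hv : IsArc F v) (hV : finrank F V = 3) (hq : Odd (Nat.card F)) :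
    Fintype.card ι ≤ Nat.card F + 1 := by
  rcases (hv.card_le hV).lt_or_eq with h | h
  · omega
  · obtain ⟨a, ha⟩ := hv.even_card_of_card_eq hV h
    obtain ⟨b, hb⟩ := hq
    omega

end IsArc

namespace Matrix

variable {l m : Type*} [Fintype ι]

def IsMDS [Fintype m] [DecidableEq m] (G : Matrix m ι F) : Prop :=
  ∀ c : m → ι, Injective c → (G.submatrix id c).det ≠ 0

theorem mulVec_eq_submatrix_mulVec_of_forall_notMem_range [Fintype m] (G : Matrix l ι F)
    {c : m → ι} (hc : Injective c) {x : ι → F} (hx : ∀ i ∉ Set.range c, x i = 0) :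
    G *ᵥ x = G.submatrix id c *ᵥ (x ∘ c) := by
  ext r
  exact (Fintype.sum_of_injective c hc _ _ (fun i hi => by simp [hx i hi]) fun _ => rfl).symm

theorem eq_zero_of_mulVec_eq_zero_of_forall_notMem_range [Fintype m] [DecidableEq m]
    {G : Matrix m ι F} {c : m → ι} (hc : Injective c) (hdet : (G.submatrix id c).det ≠ 0)
    {x : ι → F} (hGx : G *ᵥ x = 0) (hx : ∀ i ∉ Set.range c, x i = 0) : x = 0 := by
  have hxc : x ∘ c = 0 := eq_zero_of_mulVec_eq_zero hdet
    (by rw [← G.mulVec_eq_submatrix_mulVec_of_forall_notMem_range hc hx, hGx])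
  funext i
  by_cases hi : i ∈ Set.range c
  · obtain ⟨l, rfl⟩ := hi
    exact congrFun hxc l
  · exact hx i hi

variable (G : Matrix m ι F)

noncomputable def kerCoord (i : ι) : Dual F (LinearMap.ker G.mulVecLin) :=
  (LinearMap.proj i).domRestrict _

@[simp]
theorem kerCoord_apply (i : ι) (x : LinearMap.ker G.mulVecLin) : G.kerCoord i x = x.1 i := rfl

variable {G} [Fintype m] [DecidableEq m]

theorem IsMDS.eq_zero_of_mulVec_eq_zero (hG : G.IsMDS) (hcard : Fintype.card ι = Fintype.card m + 3)
    {i j k : ι} (hij : i ≠ j) (hik : i ≠ k) (hjk : j ≠ k) {x : ι → F} (hGx : G *ᵥ x = 0)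
    (hi : x i = 0) (hj : x j = 0) (hk : x k = 0) : x = 0 := by
  classical
  set s : Finset ι := {i, j, k}ᶜ
  have hs : Fintype.card m = Fintype.card s := by
    rw [Fintype.card_coe, Finset.card_compl, Finset.card_insert_of_notMem (by simp [hij, hik]),
      Finset.card_pair hjk]
    omega
  set e : m ≃ s := Fintype.equivOfCardEq hs
  have hc : Injective (Subtype.val ∘ e) := Subtype.val_injective.comp e.injective
  refine eq_zero_of_mulVec_eq_zero_of_forall_notMem_range hc (hG _ hc) hGx fun l hl => ?_
  have : l ∈ ({i, j, k} : Finset ι) := by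
    by_contra h
    exact hl ⟨e.symm ⟨l, Finset.mem_compl.mpr h⟩, by simp⟩
  simp only [Finset.mem_insert, Finset.mem_singleton] at this
  rcases this with rfl | rfl | rfl <;> assumption

theorem IsMDS.injective_pi_kerCoord (hG : G.IsMDS) (hcard : Fintype.card ι = Fintype.card m + 3)
    {i j k : ι} (hij : i ≠ j) (hik : i ≠ k) (hjk : j ≠ k) :
    Injective (LinearMap.pi ![G.kerCoord i, G.kerCoord j, G.kerCoord k]) := by
  rw [← LinearMap.ker_eq_bot, eq_bot_iff]
  rintro ⟨x, hx⟩ hTx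
  have hTx := congrFun (LinearMap.mem_ker.mp hTx)
  rw [mem_bot, mk_eq_zero]
  exact hG.eq_zero_of_mulVec_eq_zero hcard hij hik hjk hx
    (by simpa using hTx 0) (by simpa using hTx 1) (by simpa using hTx 2)

theorem IsMDS.finrank_ker_mulVecLin (hG : G.IsMDS) (hcard : Fintype.card ι = Fintype.card m + 3) :
    finrank F (LinearMap.ker G.mulVecLin) = 3 := by
  obtain ⟨i, j, k, hij, hik, hjk⟩ := Fintype.two_lt_card_iff.mp (by omega : 2 < Fintype.card ι)
  refine le_antisymm ?_ ?_
  · simpa using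
      LinearMap.finrank_le_finrank_of_injective (hG.injective_pi_kerCoord hcard hij hik hjk)
  · have hsum := G.mulVecLin.finrank_range_add_finrank_ker
    have hrange := Submodule.finrank_le (LinearMap.range G.mulVecLin)
    rw [finrank_fintype_fun_eq_card] at hsum hrange
    omega

theorem IsMDS.isArc_kerCoord (hG : G.IsMDS) (hcard : Fintype.card ι = Fintype.card m + 3) :
    IsArc F G.kerCoord := by
  intro i j k hij hik hjk hmem
  obtain ⟨x, hx⟩ := (LinearMap.injective_iff_surjective_of_finrank_eq_finrank
    (by simp [hG.finrank_ker_mulVecLin hcard])).mp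
    (hG.injective_pi_kerCoord hcard hij hik hjk) ![0, 0, 1]
  have hxi : G.kerCoord i x = 0 := by simpa using congrFun hx 0
  have hxj : G.kerCoord j x = 0 := by simpa using congrFun hx 1
  have hxk : G.kerCoord k x = 1 := by simpa using congrFun hx 2
  obtain ⟨a, b, hab⟩ := mem_span_pair.mp hmem
  simpa [hxi, hxj, hxk] using LinearMap.congr_fun hab x

end Matrix

end

theorem stmt18 {F : Type*} [Field F] [Fintype F] {q n : ℕ} (hF : Fintype.card F = q)
    (hn : 4 ≤ n) (G : Matrix (Fin (n - 3)) (Fin n) F)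
    (hG : ∀ c : Fin (n - 3) → Fin n, Function.Injective c →
      Matrix.det (G.submatrix id c) ≠ 0) :
    n ≤ q + 2 ∧ (Odd q → n ≤ q + 1) := by
  subst hF
  have hcard : Fintype.card (Fin n) = Fintype.card (Fin (n - 3)) + 3 := by simp; omega
  have hv : IsArc F G.kerCoord := Matrix.IsMDS.isArc_kerCoord hG hcard
  have hV : finrank F (Dual F (LinearMap.ker G.mulVecLin)) = 3 := by
    rw [Subspace.dual_finrank_eq, Matrix.IsMDS.finrank_ker_mulVecLin hG hcard]
  have hle := hv.card_le hV
  have hle_of_odd := hv.card_le_of_odd hV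
  simp only [Fintype.card_fin, Nat.card_eq_fintype_card] at hle hle_of_odd
  exact ⟨hle, hle_of_odd⟩
end

section
/- Let F be a field with a primitive n-th root of unity ω and let gcd(k, n) = 1. Let A be the r×n matrix with (a,c) entry ω^(k·a·c), and let B = (v | w | A) where v = (1,0,...,0)ᵀ, w = (0,...,0,1)ᵀ. Then every r×r column-submatrix of B is invertible, so B generates an MDS [n+2, r] code. -/
/-!
With `ζ = ω ^ k`, again a primitive `n`-th root of unity, the columns of `B` are the Vandermonde
columns `(x ^ a * y ^ (r - 1 - a))ₐ` of the points `0 = (0 : 1)`, `∞ = (1 : 0)` and `ζ ^ j = (ζ ^ j : 1)`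
of the projective line. These `n + 2` points are pairwise distinct, so every `r × r` minor is a
projective Vandermonde determinant `∏ (xⱼ yᵢ - xᵢ yⱼ)` with no vanishing factor.
-/

open Matrix

theorem Matrix.det_projVandermonde_ne_zero {R : Type*} [CommRing R] [IsDomain R] {n : ℕ}
    {v w : Fin n → R} (h : Pairwise fun i j => v i * w j ≠ v j * w i) :
    (projVandermonde v w).det ≠ 0 := by
  rw [det_projVandermonde]
  refine Finset.prod_ne_zero_iff.2 fun i _ => Finset.prod_ne_zero_iff.2 fun j hj => ?_
  exact sub_ne_zero.2 (h (Finset.mem_Ioi.1 hj).ne')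

section

variable {F : Type*} [Field F] {n : ℕ}

def projNodeX (ζ : F) : Fin 2 ⊕ Fin n → F := Sum.elim ![0, 1] fun j => ζ ^ (j : ℕ)

def projNodeY : Fin 2 ⊕ Fin n → F := Sum.elim ![1, 0] 1

theorem fromCols_eq_transpose_rectVandermonde (ζ : F) (r : ℕ) :
    fromCols
      (of fun (a : Fin r) (j : Fin 2) =>
        if j = 0 then (if (a : ℕ) = 0 then (1 : F) else 0)
        else (if (a : ℕ) = r - 1 then 1 else 0))
      (of fun (a : Fin r) (j : Fin n) => ζ ^ ((a : ℕ) * (j : ℕ))) =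
    (rectVandermonde (projNodeX ζ) projNodeY r)ᵀ := by
  ext a (j | j)
  · fin_cases j
    · simp [rectVandermonde_apply, projNodeX, projNodeY, zero_pow_eq]
    · have := a.isLt
      by_cases h : (a : ℕ) = r - 1 <;>
        simp [rectVandermonde_apply, projNodeX, projNodeY, h, zero_pow_eq, Fin.rev] <;> omega
  · simp [rectVandermonde_apply, projNodeX, projNodeY, ← pow_mul, mul_comm]

theorem IsPrimitiveRoot.pairwise_projNode_cross_ne {ζ : F} (hζ : IsPrimitiveRoot ζ n) :
    Pairwise fun x y : Fin 2 ⊕ Fin n =>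
      projNodeX ζ x * projNodeY y ≠ projNodeX ζ y * projNodeY x := by
  have hpow_ne_zero (j : Fin n) : ζ ^ (j : ℕ) ≠ 0 := pow_ne_zero _ (hζ.ne_zero (Fin.pos j).ne')
  rintro (i | i) (j | j) hij
  · fin_cases i <;> fin_cases j <;> simp_all [projNodeX, projNodeY]
  · fin_cases i <;> simp [projNodeX, projNodeY, (hpow_ne_zero j).symm]
  · fin_cases j <;> simp [projNodeX, projNodeY, hpow_ne_zero]
  · simp only [projNodeX, projNodeY, Sum.elim_inr, Pi.one_apply, mul_one]
    exact fun h => hij (congrArg Sum.inr (Fin.ext (hζ.pow_inj i.isLt j.isLt h)))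

end

theorem stmt19_general {F : Type*} [Field F] {n k r : ℕ} {ω : F} (hω : IsPrimitiveRoot ω n)
    (hk : Nat.Coprime k n) :
    ∀ c : Fin r → (Fin 2 ⊕ Fin n), Function.Injective c →
      Matrix.det
        ((Matrix.fromCols
            (Matrix.of fun (a : Fin r) (j : Fin 2) =>
              if j = 0 then (if (a : ℕ) = 0 then (1 : F) else 0)
              else (if (a : ℕ) = r - 1 then 1 else 0))
            (Matrix.of fun (a : Fin r) (j : Fin n) => ω ^ (k * (a : ℕ) * (j : ℕ)))).submatrix
          id c) ≠ 0 := by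
  intro c hc
  have hpow : (fun (a : Fin r) (j : Fin n) => ω ^ (k * (a : ℕ) * (j : ℕ))) =
      fun (a : Fin r) (j : Fin n) => (ω ^ k) ^ ((a : ℕ) * (j : ℕ)) := by
    simp only [mul_assoc, pow_mul]
  rw [hpow, fromCols_eq_transpose_rectVandermonde, ← transpose_submatrix, det_transpose]
  exact det_projVandermonde_ne_zero
    ((hω.pow_of_coprime k hk).pairwise_projNode_cross_ne.comp_of_injective hc)

theorem stmt19 {F : Type*} [Field F] {n k r : ℕ} {ω : F} (hω : IsPrimitiveRoot ω n)
    (hk : Nat.Coprime k n) (hr1 : 1 ≤ r) (hrn : r ≤ n) :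
    ∀ c : Fin r → (Fin 2 ⊕ Fin n), Function.Injective c →
      Matrix.det
        ((Matrix.fromCols
            (Matrix.of fun (a : Fin r) (j : Fin 2) =>
              if j = 0 then (if (a : ℕ) = 0 then (1 : F) else 0)
              else (if (a : ℕ) = r - 1 then 1 else 0))
            (Matrix.of fun (a : Fin r) (j : Fin n) => ω ^ (k * (a : ℕ) * (j : ℕ)))).submatrix
          id c) ≠ 0 :=
  stmt19_general hω hk
end
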